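/- Carleman's Inequality: Let a_1, a_2, a_3, ... be a sequence of non-negative real numbers, not all equal to 0, such that the series ∑_{n=1}^∞ a_n converges. Then ∑_{n=1}^∞ (a_1 a_2 ⋯ a_n)^{1/n} < e · ∑_{n=1}^∞ a_n. -/
import Mathlib

open Finset

noncomputable def carlemanC : ℕ → ℝ := fun i => ((i : ℝ) + 2) ^ (i + 1) / ((i : ℝ) + 1) ^ i

lemma carlemanC_pos (i : ℕ) : 0 < carlemanC i := by
  unfold carlemanC; positivity

lemma prod_carlemanC (n : ℕ) :
    ∏ i ∈ range (n + 1), carlemanC i = ((n : ℝ) + 2) ^ (n + 1) := by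
  induction n with
  | zero => simp [carlemanC]
  | succ n ih =>
    rw [Finset.prod_range_succ, ih]
    unfold carlemanC
    push_cast
    have h1 : ((n : ℝ) + 1 + 1) ^ (n + 1) ≠ 0 := by positivity
    field_simp
    ring

lemma carleman_key (a : ℕ → ℝ) (ha : ∀ i, 0 ≤ a i) (n : ℕ) :
    (∏ i ∈ range (n + 1), a i) ^ ((n + 1 : ℝ))⁻¹ ≤
      (((n : ℝ) + 1) * ((n : ℝ) + 2))⁻¹ * ∑ i ∈ range (n + 1), carlemanC i * a i := by
  have hz : ∀ i ∈ range (n + 1), 0 ≤ carlemanC i * a i :=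
    fun i _ => mul_nonneg (carlemanC_pos i).le (ha i)
  have hw' : ∑ _i ∈ range (n + 1), ((n : ℝ) + 1)⁻¹ = 1 := by
    rw [Finset.sum_const, Finset.card_range]
    rw [nsmul_eq_mul]
    push_cast
    field_simp
  have amgm := Real.geom_mean_le_arith_mean_weighted (range (n + 1))
      (fun _ => ((n : ℝ) + 1)⁻¹) (fun i => carlemanC i * a i)
      (fun i _ => by positivity) hw' hz
  have hprod : ∏ i ∈ range (n + 1), (carlemanC i * a i) ^ ((n : ℝ) + 1)⁻¹
      = (((n : ℝ) + 2) * (∏ i ∈ range (n + 1), a i) ^ ((n : ℝ) + 1)⁻¹) := by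
    rw [Real.finset_prod_rpow _ _ hz]
    rw [Finset.prod_mul_distrib, prod_carlemanC]
    rw [Real.mul_rpow (by positivity) (Finset.prod_nonneg fun i _ => ha i)]
    congr 1
    rw [← Real.rpow_natCast ((n : ℝ) + 2) (n + 1), ← Real.rpow_mul (by positivity)]
    push_cast
    rw [mul_inv_cancel₀ (by positivity), Real.rpow_one]
  rw [hprod] at amgm
  have h2 : (0 : ℝ) < (n : ℝ) + 2 := by positivity
  have h3 : ∑ i ∈ range (n + 1), ((n : ℝ) + 1)⁻¹ * (carlemanC i * a i)
      = ((n : ℝ) + 1)⁻¹ * ∑ i ∈ range (n + 1), carlemanC i * a i := by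
    rw [Finset.mul_sum]
  rw [h3] at amgm
  have hcast : ((n + 1 : ℝ))⁻¹ = ((n : ℝ) + 1)⁻¹ := by norm_num
  rw [hcast]
  rw [mul_inv, mul_assoc]
  calc (∏ i ∈ range (n + 1), a i) ^ ((n : ℝ) + 1)⁻¹
      = (((n : ℝ) + 2) * (∏ i ∈ range (n + 1), a i) ^ ((n : ℝ) + 1)⁻¹) / ((n : ℝ) + 2) := by
        field_simp
    _ ≤ (((n : ℝ) + 1)⁻¹ * ∑ i ∈ range (n + 1), carlemanC i * a i) / ((n : ℝ) + 2) := by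
        gcongr
    _ = ((n : ℝ) + 1)⁻¹ * (((n : ℝ) + 2)⁻¹ * ∑ i ∈ range (n + 1), carlemanC i * a i) := by
        ring

lemma carleman_tele (i N : ℕ) :
    ∑ n ∈ Finset.Ico i N, (((n : ℝ) + 1) * ((n : ℝ) + 2))⁻¹ ≤ ((i : ℝ) + 1)⁻¹ := by
  have hterm : ∀ n : ℕ, (((n : ℝ) + 1) * ((n : ℝ) + 2))⁻¹
      = ((n : ℝ) + 1)⁻¹ - ((n : ℝ) + 1 + 1)⁻¹ := by
    intro n
    have h1 : ((n : ℝ) + 1) ≠ 0 := by positivity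
    have h2 : ((n : ℝ) + 1 + 1) ≠ 0 := by positivity
    field_simp
    ring_nf
  rcases le_or_gt N i with h | h
  · rw [Finset.Ico_eq_empty (by omega)]
    simp; positivity
  · rw [Finset.sum_Ico_eq_sum_range]
    have : ∀ k ∈ range (N - i),
        (((i + k : ℕ) : ℝ) + 1) * (((i + k : ℕ) : ℝ) + 2) =
        (((i + k : ℕ) : ℝ) + 1) * (((i + k : ℕ) : ℝ) + 2) := fun _ _ => rfl
    calc ∑ k ∈ range (N - i), ((((i + k : ℕ) : ℝ) + 1) * (((i + k : ℕ) : ℝ) + 2))⁻¹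
        = ∑ k ∈ range (N - i),
            ((((i + k : ℕ) : ℝ) + 1)⁻¹ - (((i + (k + 1) : ℕ) : ℝ) + 1)⁻¹) := by
          refine Finset.sum_congr rfl fun k _ => ?_
          rw [hterm]
          push_cast
          ring_nf
      _ = (((i + 0 : ℕ) : ℝ) + 1)⁻¹ - (((i + (N - i) : ℕ) : ℝ) + 1)⁻¹ :=
          Finset.sum_range_sub' (fun k => (((i + k : ℕ) : ℝ) + 1)⁻¹) (N - i)
      _ ≤ ((i : ℝ) + 1)⁻¹ := by
          simp only [Nat.add_zero]
          have : (0:ℝ) ≤ (((i + (N - i) : ℕ) : ℝ) + 1)⁻¹ := by positivity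
          linarith

lemma carleman_d_lt (i : ℕ) : carlemanC i / ((i : ℝ) + 1) < Real.exp 1 := by
  have h1 : (0 : ℝ) < (i : ℝ) + 1 := by positivity
  have heq : carlemanC i / ((i : ℝ) + 1) = (1 + ((i : ℝ) + 1)⁻¹) ^ (i + 1) := by
    unfold carlemanC
    have : (1 + ((i : ℝ) + 1)⁻¹) = ((i : ℝ) + 2) / ((i : ℝ) + 1) := by field_simp; ring
    rw [this, div_pow, pow_succ ((i : ℝ) + 1) i]
    field_simp
  rw [heq]
  have hlt : 1 + ((i : ℝ) + 1)⁻¹ < Real.exp (((i : ℝ) + 1)⁻¹) := by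
    have := Real.add_one_lt_exp (x := ((i : ℝ) + 1)⁻¹) (by positivity)
    linarith
  calc (1 + ((i : ℝ) + 1)⁻¹) ^ (i + 1) < (Real.exp (((i : ℝ) + 1)⁻¹)) ^ (i + 1) := by
        apply pow_lt_pow_left₀ hlt (by positivity) (by omega)
    _ = Real.exp 1 := by
        rw [← Real.exp_nat_mul]
        congr 1
        push_cast
        field_simp

/-- Carleman's Inequality. -/
theorem carleman_inequality (a : ℕ → ℝ) (hnonneg : ∀ n, 0 ≤ a n)
    (hne : ∃ n, a n ≠ 0) (hsum : Summable a) :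
    Summable (fun n : ℕ => (∏ i ∈ Finset.range (n + 1), a i) ^ ((n + 1 : ℝ))⁻¹) ∧
      ∑' n : ℕ, (∏ i ∈ Finset.range (n + 1), a i) ^ ((n + 1 : ℝ))⁻¹ <
        Real.exp 1 * ∑' n : ℕ, a n := by
  set b : ℕ → ℝ := fun n => (∏ i ∈ Finset.range (n + 1), a i) ^ ((n + 1 : ℝ))⁻¹ with hb
  set g : ℕ → ℝ := fun i => carlemanC i / ((i : ℝ) + 1) * a i with hg
  have hg_nonneg : ∀ i, 0 ≤ g i := fun i =>
    mul_nonneg (div_nonneg (carlemanC_pos i).le (by positivity)) (hnonneg i)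
  have hg_le : ∀ i, g i ≤ Real.exp 1 * a i := fun i =>
    mul_le_mul_of_nonneg_right (carleman_d_lt i).le (hnonneg i)
  have hE : Summable fun i => Real.exp 1 * a i := hsum.mul_left _
  have hgsum : Summable g := Summable.of_nonneg_of_le hg_nonneg hg_le hE
  obtain ⟨m, hm⟩ := hne
  have ham : 0 < a m := lt_of_le_of_ne (hnonneg m) (Ne.symm hm)
  have hglt : ∑' i, g i < ∑' i, Real.exp 1 * a i :=
    Summable.tsum_lt_tsum_of_nonneg hg_nonneg hg_le
      (mul_lt_mul_of_pos_right (carleman_d_lt m) ham) hE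
  have hb_nonneg : ∀ n, 0 ≤ b n := fun n =>
    Real.rpow_nonneg (Finset.prod_nonneg fun i _ => hnonneg i) _
  -- partial sums bound
  have hpartial : ∀ N, ∑ n ∈ range N, b n ≤ ∑' i, g i := by
    intro N
    have step1 : ∑ n ∈ range N, b n ≤
        ∑ n ∈ range N, (((n : ℝ) + 1) * ((n : ℝ) + 2))⁻¹ *
          ∑ i ∈ range (n + 1), carlemanC i * a i := by
      apply Finset.sum_le_sum
      intro n _
      exact carleman_key a hnonneg n
    have step2 : ∑ n ∈ range N, (((n : ℝ) + 1) * ((n : ℝ) + 2))⁻¹ *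
          ∑ i ∈ range (n + 1), carlemanC i * a i ≤ ∑ i ∈ range N, g i := by
      have hswap : ∑ n ∈ range N, ∑ i ∈ range (n + 1),
            (((n : ℝ) + 1) * ((n : ℝ) + 2))⁻¹ * (carlemanC i * a i)
          = ∑ i ∈ range N, ∑ n ∈ Finset.Ico i N,
            (((n : ℝ) + 1) * ((n : ℝ) + 2))⁻¹ * (carlemanC i * a i) := by
        apply Finset.sum_comm'
        intro n i
        simp only [Finset.mem_range, Finset.mem_Ico]
        omega
      calc ∑ n ∈ range N, (((n : ℝ) + 1) * ((n : ℝ) + 2))⁻¹ *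
            ∑ i ∈ range (n + 1), carlemanC i * a i
          = ∑ n ∈ range N, ∑ i ∈ range (n + 1),
            (((n : ℝ) + 1) * ((n : ℝ) + 2))⁻¹ * (carlemanC i * a i) := by
            refine Finset.sum_congr rfl fun n _ => ?_
            rw [Finset.mul_sum]
        _ = ∑ i ∈ range N, ∑ n ∈ Finset.Ico i N,
            (((n : ℝ) + 1) * ((n : ℝ) + 2))⁻¹ * (carlemanC i * a i) := hswap
        _ = ∑ i ∈ range N, (carlemanC i * a i) *
            ∑ n ∈ Finset.Ico i N, (((n : ℝ) + 1) * ((n : ℝ) + 2))⁻¹ := by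
            refine Finset.sum_congr rfl fun i _ => ?_
            rw [Finset.mul_sum]
            refine Finset.sum_congr rfl fun n _ => ?_
            ring
        _ ≤ ∑ i ∈ range N, (carlemanC i * a i) * ((i : ℝ) + 1)⁻¹ := by
            apply Finset.sum_le_sum
            intro i _
            exact mul_le_mul_of_nonneg_left (carleman_tele i N)
              (mul_nonneg (carlemanC_pos i).le (hnonneg i))
        _ = ∑ i ∈ range N, g i := by
            refine Finset.sum_congr rfl fun i _ => ?_
            simp only [hg]
            field_simp
    have step3 : ∑ i ∈ range N, g i ≤ ∑' i, g i :=
      Summable.sum_le_tsum (range N) (fun i _ => hg_nonneg i) hgsum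
    linarith
  have hbsum : Summable b := summable_of_sum_range_le hb_nonneg hpartial
  refine ⟨hbsum, ?_⟩
  have h1 : ∑' n, b n ≤ ∑' i, g i := Summable.tsum_le_of_sum_range_le hbsum hpartial
  have h2 : ∑' i, Real.exp 1 * a i = Real.exp 1 * ∑' n, a n := tsum_mul_left
  calc ∑' n, b n ≤ ∑' i, g i := h1
    _ < ∑' i, Real.exp 1 * a i := hglt
    _ = Real.exp 1 * ∑' n, a n := h2
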